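/- arXiv:2602.24268 — 2 statements merged into one kernel-verified Lean document; each statement's English description precedes it below -/
import Mathlib

section
/- Suppose at time t: R(t) ∈ SO(3) with bᵢ = R(t) eᵢ, Ṙ(t) = R(t) Ω̂, v̇(t) = (f/m) b₃ − g e₃, the constraints p̂ = −b₁, v₂ = ρ Ω₃, v₃ = −ρ Ω₂ hold (where ρ = ‖p(t)‖ > 0, vᵢ = bᵢ ⋅ v(t), Ωᵢ = eᵢ ⋅ Ω). Then the function t' ↦ b₂(t') ⋅ v(t') is differentiable at t with derivative −v₁ Ω₃ − ρ Ω₂ Ω₁ − g s₂, and the function t' ↦ b₃(t') ⋅ v(t') is differentiable at t with derivative v₁ Ω₂ − ρ Ω₃ Ω₁ + f/m − g s₃, where s₂ = e₃ ⋅ b₂ and s₃ = e₃ ⋅ b₃. -/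
open Matrix

/-- Standard basis vectors of `ℝ³ = Fin 3 → ℝ` (so `e 0 = e₁`, `e 1 = e₂`, `e 2 = e₃`). -/
def e (i : Fin 3) : Fin 3 → ℝ := Pi.single i 1

/-- `SO(3)`: real 3×3 matrices with `RᵀR = I` and `det R = 1`. -/
def SO3 (R : Matrix (Fin 3) (Fin 3) ℝ) : Prop := Rᵀ * R = 1 ∧ R.det = 1

/-- The Euclidean norm on `ℝ³ = Fin 3 → ℝ`. -/
noncomputable def enorm3 (x : Fin 3 → ℝ) : ℝ := Real.sqrt (x ⬝ᵥ x)

/-- The hat map: `hat Ω` is the skew-symmetric matrix with `(hat Ω) y = Ω × y`. -/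
def hat (Ω : Fin 3 → ℝ) : Matrix (Fin 3) (Fin 3) ℝ :=
  !![0, -Ω 2, Ω 1; Ω 2, 0, -Ω 0; -Ω 1, Ω 0, 0]

attribute [local instance] Matrix.normedAddCommGroup Matrix.normedSpace

/-! By the product rule, `d/dt (bⱼ ⋅ v) = R (Ω × eⱼ) ⋅ v + bⱼ ⋅ v̇`. The first term is a combination
of body components of `v`, into which the constraint `v₃ = −ρ Ω₂` (resp. `v₂ = ρ Ω₃`) is substituted;
in the second, orthonormality of the body frame gives `bⱼ ⋅ b₃ = eⱼ ⋅ e₃`. -/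

section Calculus

variable {ι κ : Type*} [Fintype ι] {t : ℝ}

theorem HasDerivAt.dotProduct {u v : ℝ → ι → ℝ} {u' v' : ι → ℝ}
    (hu : HasDerivAt u u' t) (hv : HasDerivAt v v' t) :
    HasDerivAt (fun s => u s ⬝ᵥ v s) (u' ⬝ᵥ v t + u t ⬝ᵥ v') t := by
  have := HasDerivAt.fun_sum (u := Finset.univ) fun i _ =>
    (hasDerivAt_pi.mp hu i).fun_mul (hasDerivAt_pi.mp hv i)
  simp only [Finset.sum_add_distrib] at this
  exact this

theorem HasDerivAt.mulVec_const {R : ℝ → Matrix κ ι ℝ} {R' : Matrix κ ι ℝ}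
    (hR : HasDerivAt R R' t) (w : ι → ℝ) :
    HasDerivAt (fun s => R s *ᵥ w) (R' *ᵥ w) t :=
  hasDerivAt_pi.mpr fun i =>
    (hasDerivAt_pi.mp hR i).dotProduct (hasDerivAt_const t w) |>.congr_deriv (by simp [mulVec])

end Calculus

theorem dotProduct_mulVec_mulVec_of_transpose_mul_self {ι κ α : Type*} [Fintype ι] [Fintype κ]
    [DecidableEq ι] [CommSemiring α] {R : Matrix κ ι α} (h : Rᵀ * R = 1) (x y : ι → α) :
    (R *ᵥ x) ⬝ᵥ (R *ᵥ y) = x ⬝ᵥ y := by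
  rw [dotProduct_mulVec, ← mulVec_transpose, mulVec_mulVec, h, one_mulVec]

theorem e_dotProduct (i : Fin 3) (x : Fin 3 → ℝ) : e i ⬝ᵥ x = x i := by
  simp [e]

theorem e_one_dotProduct_e_two : e 1 ⬝ᵥ e 2 = 0 := by
  simp [e]

theorem e_two_dotProduct_e_two : e 2 ⬝ᵥ e 2 = 1 := by
  simp [e]

theorem hat_mulVec_e_one (Ω : Fin 3 → ℝ) : hat Ω *ᵥ e 1 = Ω 0 • e 2 - Ω 2 • e 0 := by
  ext i; fin_cases i <;> simp [hat, e, mulVec, dotProduct, Fin.sum_univ_three]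

theorem hat_mulVec_e_two (Ω : Fin 3 → ℝ) : hat Ω *ᵥ e 2 = Ω 1 • e 0 - Ω 0 • e 1 := by
  ext i; fin_cases i <;> simp [hat, e, mulVec, dotProduct, Fin.sum_univ_three]

theorem vdot_components_general (m g f : ℝ)
    (R : ℝ → Matrix (Fin 3) (Fin 3) ℝ) (p v : ℝ → Fin 3 → ℝ) (Ω : Fin 3 → ℝ) (t : ℝ)
    (hSO : SO3 (R t))
    (hR : HasDerivAt R (R t * hat Ω) t)
    (hv : HasDerivAt v ((f / m) • (R t *ᵥ e 2) - g • e 2) t)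
    (hc2 : (R t *ᵥ e 1) ⬝ᵥ v t = enorm3 (p t) * (e 2 ⬝ᵥ Ω))
    (hc3 : (R t *ᵥ e 2) ⬝ᵥ v t = -(enorm3 (p t) * (e 1 ⬝ᵥ Ω))) :
    HasDerivAt (fun s => (R s *ᵥ e 1) ⬝ᵥ v s)
      (-(((R t *ᵥ e 0) ⬝ᵥ v t) * (e 2 ⬝ᵥ Ω)) -
        enorm3 (p t) * (e 1 ⬝ᵥ Ω) * (e 0 ⬝ᵥ Ω) - g * (e 2 ⬝ᵥ (R t *ᵥ e 1))) t ∧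
    HasDerivAt (fun s => (R s *ᵥ e 2) ⬝ᵥ v s)
      (((R t *ᵥ e 0) ⬝ᵥ v t) * (e 1 ⬝ᵥ Ω) -
        enorm3 (p t) * (e 2 ⬝ᵥ Ω) * (e 0 ⬝ᵥ Ω) + f / m - g * (e 2 ⬝ᵥ (R t *ᵥ e 2))) t := by
  have hframe := dotProduct_mulVec_mulVec_of_transpose_mul_self hSO.1
  have hb (j : Fin 3) : HasDerivAt (fun s => (R s *ᵥ e j) ⬝ᵥ v s)
      ((R t *ᵥ (hat Ω *ᵥ e j)) ⬝ᵥ v t + f / m * (e j ⬝ᵥ e 2) - g * (e 2 ⬝ᵥ (R t *ᵥ e j))) t := by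
    convert (hR.mulVec_const (e j)).dotProduct hv using 1
    rw [← mulVec_mulVec, dotProduct_sub, dotProduct_smul, dotProduct_smul, hframe,
      dotProduct_comm (e 2), smul_eq_mul, smul_eq_mul, add_sub_assoc]
  simp only [e_dotProduct _ Ω] at hc2 hc3 ⊢
  constructor
  · convert hb 1 using 1
    rw [hat_mulVec_e_one, mulVec_sub, mulVec_smul, mulVec_smul, sub_dotProduct, smul_dotProduct,
      smul_dotProduct, hc3, e_one_dotProduct_e_two]
    ring
  · convert hb 2 using 1
    rw [hat_mulVec_e_two, mulVec_sub, mulVec_smul, mulVec_smul, sub_dotProduct, smul_dotProduct,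
      smul_dotProduct, hc2, e_two_dotProduct_e_two]
    ring

/-- On-manifold derivatives of the body-frame velocity components `v₂ = b₂ ⋅ v` and
`v₃ = b₃ ⋅ v`: under `Ṙ = R Ω̂`, `v̇ = (f/m) b₃ − g e₃` and the constraints
`p̂ = −b₁`, `v₂ = ρ Ω₃`, `v₃ = −ρ Ω₂`, one has
`d/dt (b₂ ⋅ v) = −v₁ Ω₃ − ρ Ω₂ Ω₁ − g s₂` and
`d/dt (b₃ ⋅ v) = v₁ Ω₂ − ρ Ω₃ Ω₁ + f/m − g s₃`. -/
theorem vdot_components (m g f : ℝ) (hm : 0 < m) (hg : 0 < g)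
    (R : ℝ → Matrix (Fin 3) (Fin 3) ℝ) (p v : ℝ → Fin 3 → ℝ) (Ω : Fin 3 → ℝ) (t : ℝ)
    (hSO : SO3 (R t))
    (hR : HasDerivAt R (R t * hat Ω) t)
    (hp : HasDerivAt p (v t) t)
    (hv : HasDerivAt v ((f / m) • (R t *ᵥ e 2) - g • e 2) t)
    (hρ : 0 < enorm3 (p t))
    (hpoint : (enorm3 (p t))⁻¹ • p t = -(R t *ᵥ e 0))
    (hc2 : (R t *ᵥ e 1) ⬝ᵥ v t = enorm3 (p t) * (e 2 ⬝ᵥ Ω))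
    (hc3 : (R t *ᵥ e 2) ⬝ᵥ v t = -(enorm3 (p t) * (e 1 ⬝ᵥ Ω))) :
    HasDerivAt (fun s => (R s *ᵥ e 1) ⬝ᵥ v s)
      (-(((R t *ᵥ e 0) ⬝ᵥ v t) * (e 2 ⬝ᵥ Ω)) -
        enorm3 (p t) * (e 1 ⬝ᵥ Ω) * (e 0 ⬝ᵥ Ω) - g * (e 2 ⬝ᵥ (R t *ᵥ e 1))) t ∧
    HasDerivAt (fun s => (R s *ᵥ e 2) ⬝ᵥ v s)
      (((R t *ᵥ e 0) ⬝ᵥ v t) * (e 1 ⬝ᵥ Ω) -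
        enorm3 (p t) * (e 2 ⬝ᵥ Ω) * (e 0 ⬝ᵥ Ω) + f / m - g * (e 2 ⬝ᵥ (R t *ᵥ e 2))) t :=
  vdot_components_general m g f R p v Ω t hSO hR hv hc2 hc3
end

section
/- Let m, g, J₁, J₂, J₃, ρ > 0, R ∈ SO(3) with bᵢ = R eᵢ, and define the three constraint covectors on (Ω, v) ∈ ℝ³ × ℝ³ by μ¹(Ω,v) = e₃ ⋅ v, μ²(Ω,v) = e₃ ⋅ Ω − (1/ρ)(b₂ ⋅ v), μ³(Ω,v) = e₂ ⋅ Ω + (1/ρ)(b₃ ⋅ v), and the control directions a_f = (0, (1/m) R e₃), a_{τ₂} = ((1/J₂) e₂, 0), a_{τ₃} = ((1/J₃) e₃, 0). Then the 3×3 matrix M with entries M_{a,j} = μᵃ(c_j) for (c₁, c₂, c₃) = (a_f, a_{τ₂}, a_{τ₃}) has determinant −(e₃ᵀ R e₃)/(m J₂ J₃); in particular M is invertible if and only if e₃ᵀ R e₃ ≠ 0. -/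
open Matrix

/-! `μ¹` sees only the linear velocity, which the torque directions lack, so the first row of `M` is
`(μ¹(a_f), 0, 0)`. Expanding along it leaves `μ¹(a_f) = (e₃ᵀ R e₃)/m` times the minor of the torque
columns in the rows `μ², μ³`, which is `-1/(J₂ J₃)`. -/

theorem Matrix.det_fin_three_of_zero_one_eq_zero_of_zero_two_eq_zero {R : Type*} [CommRing R]
    (A : Matrix (Fin 3) (Fin 3) R) (h₁ : A 0 1 = 0) (h₂ : A 0 2 = 0) :
    A.det = A 0 0 * (A 1 1 * A 2 2 - A 1 2 * A 2 1) := by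
  rw [det_fin_three, h₁, h₂]
  ring

theorem transversality_det_general (m J₂ J₃ ρ : ℝ)
    (hm : 0 < m) (hJ₂ : 0 < J₂) (hJ₃ : 0 < J₃)
    (R : Matrix (Fin 3) (Fin 3) ℝ) :
    let μ : Fin 3 → (Fin 3 → ℝ) × (Fin 3 → ℝ) → ℝ :=
      ![fun ξ => e 2 ⬝ᵥ ξ.2,
        fun ξ => e 2 ⬝ᵥ ξ.1 - (1 / ρ) * ((R *ᵥ e 1) ⬝ᵥ ξ.2),
        fun ξ => e 1 ⬝ᵥ ξ.1 + (1 / ρ) * ((R *ᵥ e 2) ⬝ᵥ ξ.2)]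
    let c : Fin 3 → (Fin 3 → ℝ) × (Fin 3 → ℝ) :=
      ![(0, (1 / m) • (R *ᵥ e 2)), ((1 / J₂) • e 1, 0), ((1 / J₃) • e 2, 0)]
    let M : Matrix (Fin 3) (Fin 3) ℝ := Matrix.of fun a j => μ a (c j)
    M.det = -(e 2 ⬝ᵥ (R *ᵥ e 2)) / (m * J₂ * J₃) ∧
      (IsUnit M ↔ e 2 ⬝ᵥ (R *ᵥ e 2) ≠ 0) := by
  intro μ c M
  have hM₀₀ : M 0 0 = (e 2 ⬝ᵥ (R *ᵥ e 2)) / m := by simp [M, μ, c, div_eq_inv_mul]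
  have hM₀₁ : M 0 1 = 0 := by simp [M, μ, c]
  have hM₀₂ : M 0 2 = 0 := by simp [M, μ, c]
  have hminor : M 1 1 * M 2 2 - M 1 2 * M 2 1 = -(1 / (J₂ * J₃)) := by
    simp [M, μ, c, e, mul_comm]
  have hdet : M.det = -(e 2 ⬝ᵥ (R *ᵥ e 2)) / (m * J₂ * J₃) := by
    rw [M.det_fin_three_of_zero_one_eq_zero_of_zero_two_eq_zero hM₀₁ hM₀₂, hM₀₀, hminor]
    ring
  refine ⟨hdet, ?_⟩
  rw [isUnit_iff_isUnit_det, isUnit_iff_ne_zero, hdet, div_ne_zero_iff, neg_ne_zero]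
  exact and_iff_left (by positivity)

/-- Transversality as a determinant: the matrix `M` with entries `Mₐⱼ = μᵃ(cⱼ)`,
where `μ¹,μ²,μ³` are the altitude/pointing constraint covectors and
`(c₁,c₂,c₃) = (a_f, a_{τ₂}, a_{τ₃})` the control directions, satisfies
`det M = −(e₃ᵀ R e₃)/(m J₂ J₃)`; in particular `M` is invertible iff `e₃ᵀ R e₃ ≠ 0`. -/
theorem transversality_det (m g J₁ J₂ J₃ ρ : ℝ)
    (hm : 0 < m) (hg : 0 < g) (hJ₁ : 0 < J₁) (hJ₂ : 0 < J₂) (hJ₃ : 0 < J₃) (hρ : 0 < ρ)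
    (R : Matrix (Fin 3) (Fin 3) ℝ) (hR : SO3 R) :
    let μ : Fin 3 → (Fin 3 → ℝ) × (Fin 3 → ℝ) → ℝ :=
      ![fun ξ => e 2 ⬝ᵥ ξ.2,
        fun ξ => e 2 ⬝ᵥ ξ.1 - (1 / ρ) * ((R *ᵥ e 1) ⬝ᵥ ξ.2),
        fun ξ => e 1 ⬝ᵥ ξ.1 + (1 / ρ) * ((R *ᵥ e 2) ⬝ᵥ ξ.2)]
    let c : Fin 3 → (Fin 3 → ℝ) × (Fin 3 → ℝ) :=
      ![(0, (1 / m) • (R *ᵥ e 2)), ((1 / J₂) • e 1, 0), ((1 / J₃) • e 2, 0)]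
    let M : Matrix (Fin 3) (Fin 3) ℝ := Matrix.of fun a j => μ a (c j)
    M.det = -(e 2 ⬝ᵥ (R *ᵥ e 2)) / (m * J₂ * J₃) ∧
      (IsUnit M ↔ e 2 ⬝ᵥ (R *ᵥ e 2) ≠ 0) :=
  transversality_det_general m J₂ J₃ ρ hm hJ₂ hJ₃ R
end
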